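/- arXiv:1711.01784 — 7 statements merged into one kernel-verified Lean document; each statement's English description precedes it below -/
import Mathlib

section
/- For any real numbers x_1,…,x_{m−1}, y_1,…,y_{m−1} ≥ 0, it holds that 2^{m−1}·(2^{m−1} − 2)·∏_{i=1}^{m−1} x_i y_i ≤ ∏_{i=1}^{m−1}(x_i + y_i) · (∏_{j=1}^{m−1}(x_j + y_j) − ∏_{k=1}^{m−1} x_k − ∏_{k=1}^{m−1} y_k). -/
private lemma amgm2 (a b : ℝ) (ha : 0 ≤ a) (hb : 0 ≤ b) :
    2 * Real.sqrt (a * b) ≤ a + b := by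
  nlinarith [Real.sqrt_mul ha b, Real.sq_sqrt ha, Real.sq_sqrt hb,
    sq_nonneg (Real.sqrt a - Real.sqrt b)]

private lemma stmt2_aux (n : ℕ) (hn : 1 ≤ n) (x y : Fin n → ℝ)
    (hx : ∀ i, 0 ≤ x i) (hy : ∀ i, 0 ≤ y i) :
    (2 : ℝ) ^ n * ((2 : ℝ) ^ n - 2) * ∏ i, x i * y i ≤
      (∏ i, (x i + y i)) *
        ((∏ j, (x j + y j)) - (∏ k, x k) - (∏ k, y k)) := by
  haveI : NeZero n := ⟨by omega⟩
  set c : ℝ := ∏ i, Real.sqrt (x i * y i) with hc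
  have hcnn : 0 ≤ c := Finset.prod_nonneg fun i _ => Real.sqrt_nonneg _
  have hc2 : c ^ 2 = ∏ i, x i * y i := by
    rw [hc, ← Finset.prod_pow]
    exact Finset.prod_congr rfl fun i _ => Real.sq_sqrt (mul_nonneg (hx i) (hy i))
  have hAB : (∏ k, x k) * (∏ k, y k) = c ^ 2 := by
    rw [hc2, ← Finset.prod_mul_distrib]
  -- P ≥ 2^n c
  have hP : (2 : ℝ) ^ n * c ≤ ∏ i, (x i + y i) := by
    calc (2:ℝ) ^ n * c = ∏ i, (2 * Real.sqrt (x i * y i)) := by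
          rw [Finset.prod_mul_distrib, Finset.prod_const, Finset.card_univ,
            Fintype.card_fin]
      _ ≤ ∏ i, (x i + y i) := by
          apply Finset.prod_le_prod
          · intro i _; positivity
          · intro i _; exact amgm2 _ _ (hx i) (hy i)
  -- subset expansion
  classical
  set u : Finset (Fin n) → ℝ := fun t => (∏ i ∈ t, x i) * ∏ i ∈ tᶜ, y i with hu
  have hunn : ∀ t, 0 ≤ u t := fun t =>
    mul_nonneg (Finset.prod_nonneg fun i _ => hx i) (Finset.prod_nonneg fun i _ => hy i)
  have hexp : ∏ i, (x i + y i) = ∑ t ∈ Finset.univ.powerset, u t := by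
    rw [Finset.prod_add]
    exact Finset.sum_congr rfl fun t _ => by
      rw [hu]; simp [Finset.compl_eq_univ_sdiff]
  have hune : (Finset.univ : Finset (Fin n)) ≠ ∅ := Finset.univ_nonempty.ne_empty
  have hmem1 : (Finset.univ : Finset (Fin n)) ∈ (Finset.univ : Finset (Fin n)).powerset := by
    simp
  have hmem2 : (∅ : Finset (Fin n)) ∈ (Finset.univ : Finset (Fin n)).powerset.erase Finset.univ := by
    simp [Finset.mem_erase, hune.symm]
  set T := ((Finset.univ : Finset (Fin n)).powerset.erase Finset.univ).erase ∅ with hT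
  have hsplit : ∑ t ∈ Finset.univ.powerset, u t = ∑ t ∈ T, u t + u ∅ + u Finset.univ := by
    rw [hT, Finset.sum_erase_add _ _ hmem2, Finset.sum_erase_add _ _ hmem1]
  have huuniv : u Finset.univ = ∏ k, x k := by simp [hu]
  have huempty : u ∅ = ∏ k, y k := by simp [hu]
  have hmemT : ∀ t, t ∈ T ↔ t ≠ ∅ ∧ t ≠ Finset.univ := by
    intro t
    simp [hT, Finset.mem_erase, and_comm]
  -- complement invariance
  have hinv : ∑ t ∈ T, u tᶜ = ∑ t ∈ T, u t := by
    apply Finset.sum_nbij' (i := fun t => tᶜ) (j := fun t => tᶜ)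
    · intro a ha
      rw [hmemT] at ha ⊢
      constructor
      · simp only [ne_eq, Finset.compl_eq_empty_iff]; exact ha.2
      · simp only [ne_eq, Finset.compl_eq_univ_iff]; exact ha.1
    · intro a ha
      rw [hmemT] at ha ⊢
      constructor
      · simp only [ne_eq, Finset.compl_eq_empty_iff]; exact ha.2
      · simp only [ne_eq, Finset.compl_eq_univ_iff]; exact ha.1
    · intro a _; exact compl_compl a
    · intro a _; exact compl_compl a
    · intro a _; rfl
  have hpair : ∀ t ∈ T, 2 * c ≤ u t + u tᶜ := by
    intro t _
    have hprod : u t * u tᶜ = c ^ 2 := by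
      rw [hu]
      simp only [compl_compl]
      rw [← hAB, ← Finset.prod_mul_prod_compl t x, ← Finset.prod_mul_prod_compl t y]
      ring
    calc 2 * c = 2 * Real.sqrt (u t * u tᶜ) := by
          rw [hprod, Real.sqrt_sq hcnn]
      _ ≤ u t + u tᶜ := amgm2 _ _ (hunn t) (hunn tᶜ)
  have hcardT : (T.card : ℝ) = 2 ^ n - 2 := by
    have h1 : T.card = 2 ^ n - 2 := by
      rw [hT, Finset.card_erase_of_mem hmem2, Finset.card_erase_of_mem hmem1,
        Finset.card_powerset, Finset.card_univ, Fintype.card_fin]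
      omega
    rw [h1]
    have : 2 ≤ 2 ^ n := by
      calc 2 = 2 ^ 1 := rfl
        _ ≤ 2 ^ n := Nat.pow_le_pow_right (by norm_num) hn
    push_cast [Nat.cast_sub this]
    ring
  have hsumT : ((2 : ℝ) ^ n - 2) * c ≤ ∑ t ∈ T, u t := by
    have h2 : T.card • (2 * c) ≤ ∑ t ∈ T, (u t + u tᶜ) :=
      Finset.card_nsmul_le_sum T _ _ hpair
    rw [Finset.sum_add_distrib, hinv, nsmul_eq_mul, hcardT] at h2
    linarith
  have hPAB : ((2:ℝ) ^ n - 2) * c ≤ (∏ j, (x j + y j)) - (∏ k, x k) - (∏ k, y k) := by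
    rw [hexp, hsplit, huuniv, huempty]
    linarith
  have h2n2 : (0:ℝ) ≤ ((2:ℝ) ^ n - 2) * c := by
    apply mul_nonneg _ hcnn
    have : (2:ℝ) ≤ 2 ^ n := by
      calc (2:ℝ) = 2 ^ 1 := by norm_num
        _ ≤ 2 ^ n := pow_le_pow_right₀ (by norm_num) hn
    linarith
  have hPnn : 0 ≤ ∏ i, (x i + y i) :=
    Finset.prod_nonneg fun i _ => add_nonneg (hx i) (hy i)
  calc (2 : ℝ) ^ n * ((2 : ℝ) ^ n - 2) * ∏ i, x i * y i
      = ((2:ℝ)^n * c) * (((2:ℝ)^n - 2) * c) := by rw [← hc2]; ring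
    _ ≤ _ := mul_le_mul hP hPAB h2n2 hPnn

/-- For nonnegative reals `x₁,…,x_{m−1}, y₁,…,y_{m−1}`:
`2^{m−1}(2^{m−1} − 2) ∏ xᵢyᵢ ≤ ∏(xᵢ+yᵢ) · (∏(xⱼ+yⱼ) − ∏xₖ − ∏yₖ)`. -/
theorem stmt2 (m : ℕ) (hm : 2 ≤ m) (x y : Fin (m - 1) → ℝ)
    (hx : ∀ i, 0 ≤ x i) (hy : ∀ i, 0 ≤ y i) :
    (2 : ℝ) ^ (m - 1) * ((2 : ℝ) ^ (m - 1) - 2) * ∏ i, x i * y i ≤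
      (∏ i, (x i + y i)) *
        ((∏ j, (x j + y j)) - (∏ k, x k) - (∏ k, y k)) := by
  exact stmt2_aux (m - 1) (by omega) x y hx hy
end

section
/- Let x = ∏_{i=1}^{m−1} cos²θ_i, y = ∏_{i=1}^{m−1} sin²θ_i, z = ∏_{i=1}^{m−1} sin(2θ_i) for real θ_1,…,θ_{m−1}, and let α ≥ 2^{m−1}/(2^{m−1}−1). Then (1/2)·(α(x+y) + sqrt(α²(x−y)² + 4z²)) ≤ α. -/
open Real

lemma key_prod {ι : Type*} (t : Finset ι) (c s : ι → ℝ)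
    (hc : ∀ i, 0 ≤ c i) (hs : ∀ i, 0 ≤ s i) (hcs : ∀ i, c i + s i = 1) :
    (∏ i ∈ t, Real.sqrt (c i * s i)) ≤ (1/2 : ℝ) ^ t.card ∧
    ((2:ℝ) ^ t.card - 1) * (∏ i ∈ t, Real.sqrt (c i * s i)) ≤
      Real.sqrt (1 - ∏ i ∈ t, c i) * Real.sqrt (1 - ∏ i ∈ t, s i) := by
  induction t using Finset.cons_induction with
  | empty => simp
  | cons a t ha ih =>
    obtain ⟨ih1, ih2⟩ := ih
    set x := ∏ i ∈ t, c i with hxdef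
    set y := ∏ i ∈ t, s i with hydef
    set g := ∏ i ∈ t, Real.sqrt (c i * s i) with hgdef
    have hx0 : 0 ≤ x := Finset.prod_nonneg fun i _ => hc i
    have hy0 : 0 ≤ y := Finset.prod_nonneg fun i _ => hs i
    have hx1 : x ≤ 1 := Finset.prod_le_one (fun i _ => hc i)
      (fun i _ => by nlinarith [hs i, hcs i])
    have hy1 : y ≤ 1 := Finset.prod_le_one (fun i _ => hs i)
      (fun i _ => by nlinarith [hc i, hcs i])
    have hg0 : 0 ≤ g := Finset.prod_nonneg fun i _ => Real.sqrt_nonneg _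
    set u := Real.sqrt (1 - x) with hudef
    set v := Real.sqrt (1 - y) with hvdef
    have hu0 : 0 ≤ u := Real.sqrt_nonneg _
    have hv0 : 0 ≤ v := Real.sqrt_nonneg _
    have hu2 : u ^ 2 = 1 - x := Real.sq_sqrt (by linarith)
    have hv2 : v ^ 2 = 1 - y := Real.sq_sqrt (by linarith)
    have hC := hc a
    have hS := hs a
    have hCS := hcs a
    have hsqCS : Real.sqrt (c a * s a) ≤ 1/2 := by
      rw [show (1/2 : ℝ) = Real.sqrt ((1/2)^2) by
        rw [Real.sqrt_sq]; norm_num]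
      exact Real.sqrt_le_sqrt (by nlinarith [sq_nonneg (c a - s a), hCS])
    have hsqCS0 : 0 ≤ Real.sqrt (c a * s a) := Real.sqrt_nonneg _
    rw [Finset.prod_cons, Finset.prod_cons, Finset.prod_cons, Finset.card_cons]
    constructor
    · rw [pow_succ]
      calc Real.sqrt (c a * s a) * g ≤ (1/2) * ((1/2:ℝ)^t.card) := by
            apply mul_le_mul hsqCS ih1 hg0 (by norm_num)
          _ = (1/2:ℝ)^t.card * (1/2) := by ring
    · -- main inequality
      have h2k : (0:ℝ) < (2:ℝ)^t.card := by positivity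
      have hgk : (2:ℝ)^t.card * g ≤ 1 := by
        calc (2:ℝ)^t.card * g ≤ (2:ℝ)^t.card * (1/2)^t.card :=
              mul_le_mul_of_nonneg_left ih1 (le_of_lt h2k)
          _ = 1 := by rw [← mul_pow]; norm_num
      have h1 : 1 - c a * x = u^2 * c a + s a := by
        linear_combination (-(c a)) * hu2 - hCS
      have h2 : 1 - s a * y = v^2 * s a + c a := by
        linear_combination (-(s a)) * hv2 - hCS
      have hprod : c a * s a * (u*v + 1)^2 ≤ (1 - c a * x) * (1 - s a * y) := by
        rw [h1, h2]
        nlinarith [sq_nonneg (u * c a - v * s a)]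
      have hrhs : Real.sqrt (c a * s a) * (u*v+1) ≤
          Real.sqrt (1 - c a * x) * Real.sqrt (1 - s a * y) := by
        rw [← Real.sqrt_mul (by nlinarith : (0:ℝ) ≤ 1 - c a * x)]
        calc Real.sqrt (c a * s a) * (u*v+1)
            = Real.sqrt (c a * s a * (u*v+1)^2) := by
              rw [Real.sqrt_mul (mul_nonneg hC hS), Real.sqrt_sq (by positivity)]
          _ ≤ _ := Real.sqrt_le_sqrt hprod
      calc ((2:ℝ)^(t.card+1) - 1) * (Real.sqrt (c a * s a) * g)
          = Real.sqrt (c a * s a) * (((2:ℝ)^t.card - 1) * g + (2:ℝ)^t.card * g) := by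
            rw [pow_succ]; ring
        _ ≤ Real.sqrt (c a * s a) * (u*v + 1) := by
            apply mul_le_mul_of_nonneg_left _ hsqCS0
            linarith [ih2]
        _ ≤ _ := hrhs

/-- With `x = ∏cos²θᵢ`, `y = ∏sin²θᵢ`, `z = ∏sin(2θᵢ)` and `α ≥ 2^{m−1}/(2^{m−1}−1)`,
`(1/2)(α(x+y) + √(α²(x−y)² + 4z²)) ≤ α`. -/
theorem stmt3 (m : ℕ) (hm : 2 ≤ m) (θ : Fin (m - 1) → ℝ) (α : ℝ)
    (hα : (2 : ℝ) ^ (m - 1) / ((2 : ℝ) ^ (m - 1) - 1) ≤ α) :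
    (1 / 2) * (α * ((∏ i, Real.cos (θ i) ^ 2) + ∏ i, Real.sin (θ i) ^ 2)
      + Real.sqrt (α ^ 2 * ((∏ i, Real.cos (θ i) ^ 2) - ∏ i, Real.sin (θ i) ^ 2) ^ 2
        + 4 * (∏ i, Real.sin (2 * θ i)) ^ 2)) ≤ α := by
  obtain ⟨hg, hM⟩ := key_prod (Finset.univ : Finset (Fin (m-1)))
    (fun i => Real.cos (θ i) ^ 2) (fun i => Real.sin (θ i) ^ 2)
    (fun i => sq_nonneg _) (fun i => sq_nonneg _)
    (fun i => Real.cos_sq_add_sin_sq _)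
  simp only [Finset.card_univ, Fintype.card_fin] at hg hM
  set x := ∏ i, Real.cos (θ i) ^ 2 with hxdef
  set y := ∏ i, Real.sin (θ i) ^ 2 with hydef
  set g := ∏ i, Real.sqrt (Real.cos (θ i) ^ 2 * Real.sin (θ i) ^ 2) with hgdef
  have hx0 : 0 ≤ x := Finset.prod_nonneg fun i _ => sq_nonneg _
  have hy0 : 0 ≤ y := Finset.prod_nonneg fun i _ => sq_nonneg _
  have hx1 : x ≤ 1 := Finset.prod_le_one (fun i _ => sq_nonneg _)
    (fun i _ => Real.cos_sq_le_one _)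
  have hy1 : y ≤ 1 := Finset.prod_le_one (fun i _ => sq_nonneg _)
    (fun i _ => Real.sin_sq_le_one _)
  have hg0 : 0 ≤ g := Finset.prod_nonneg fun i _ => Real.sqrt_nonneg _
  have hg2 : g ^ 2 = x * y := by
    rw [hgdef, ← Finset.prod_pow, hxdef, hydef, ← Finset.prod_mul_distrib]
    exact Finset.prod_congr rfl fun i _ => Real.sq_sqrt (by positivity)
  have hz : (∏ i, Real.sin (2 * θ i)) ^ 2 = 4 ^ (m-1) * (x * y) := by
    rw [← Finset.prod_pow, hxdef, hydef, ← Finset.prod_mul_distrib]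
    have h : ∀ i : Fin (m-1), Real.sin (2 * θ i) ^ 2
        = 4 * (Real.cos (θ i) ^ 2 * Real.sin (θ i) ^ 2) := by
      intro i; rw [Real.sin_two_mul]; ring
    rw [Finset.prod_congr rfl fun i _ => h i, Finset.prod_mul_distrib,
      Finset.prod_const, Finset.card_univ, Fintype.card_fin]
  have hn1 : 1 ≤ m - 1 := by omega
  have h2n : (2:ℝ) ≤ 2 ^ (m-1) := by
    calc (2:ℝ) = 2 ^ 1 := by norm_num
      _ ≤ 2 ^ (m-1) := pow_le_pow_right₀ (by norm_num) hn1
  have hD : (0:ℝ) < 2 ^ (m-1) - 1 := by linarith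
  have hα0 : 0 ≤ α := by
    have := div_pos (by positivity : (0:ℝ) < 2 ^ (m-1)) hD
    linarith
  set u := Real.sqrt (1 - x) with hudef
  set v := Real.sqrt (1 - y) with hvdef
  have hu2 : u ^ 2 = 1 - x := Real.sq_sqrt (by linarith)
  have hv2 : v ^ 2 = 1 - y := Real.sq_sqrt (by linarith)
  have huv0 : 0 ≤ u * v := mul_nonneg (Real.sqrt_nonneg _) (Real.sqrt_nonneg _)
  have huv : 2 ^ (m-1) * g ≤ α * (u * v) := by
    calc (2:ℝ) ^ (m-1) * g = (2 ^ (m-1) / (2 ^ (m-1) - 1)) * ((2 ^ (m-1) - 1) * g) := by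
          field_simp
      _ ≤ α * ((2 ^ (m-1) - 1) * g) := by
          apply mul_le_mul_of_nonneg_right hα
          exact mul_nonneg (by linarith) hg0
      _ ≤ α * (u * v) := mul_le_mul_of_nonneg_left hM hα0
  have hkey : 4 ^ (m-1) * (x * y) ≤ α ^ 2 * ((1 - x) * (1 - y)) := by
    have h1 : (2 ^ (m-1) * g) ^ 2 ≤ (α * (u * v)) ^ 2 :=
      pow_le_pow_left₀ (mul_nonneg (by positivity) hg0) huv 2
    have h4 : ((2:ℝ) ^ (m-1)) ^ 2 = 4 ^ (m-1) := by
      rw [← pow_mul, pow_mul']; norm_num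
    have e1 : ((2:ℝ) ^ (m-1) * g) ^ 2 = 4 ^ (m-1) * (x * y) := by
      rw [mul_pow, h4, hg2]
    have e2 : (α * (u * v)) ^ 2 = α ^ 2 * ((1 - x) * (1 - y)) := by
      rw [mul_pow, mul_pow, hu2, hv2]
    linarith [h1]
  have hsum : α ^ 2 * (x - y) ^ 2 + 4 * (4 ^ (m-1) * (x * y))
      ≤ α ^ 2 * (2 - x - y) ^ 2 := by
    calc α ^ 2 * (x - y) ^ 2 + 4 * (4 ^ (m-1) * (x * y))
        ≤ α ^ 2 * (x - y) ^ 2 + 4 * (α ^ 2 * ((1 - x) * (1 - y))) := by linarith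
      _ = α ^ 2 * (2 - x - y) ^ 2 := by ring
  have hsqrt : Real.sqrt (α ^ 2 * (x - y) ^ 2 + 4 * (∏ i, Real.sin (2 * θ i)) ^ 2)
      ≤ α * (2 - x - y) := by
    rw [hz]
    calc Real.sqrt (α ^ 2 * (x - y) ^ 2 + 4 * (4 ^ (m-1) * (x * y)))
        ≤ Real.sqrt (α ^ 2 * (2 - x - y) ^ 2) := Real.sqrt_le_sqrt hsum
      _ = α * (2 - x - y) := by
          rw [show α ^ 2 * (2 - x - y) ^ 2 = (α * (2 - x - y)) ^ 2 by ring,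
            Real.sqrt_sq (mul_nonneg hα0 (by linarith))]
  linarith [hsqrt]
end

section
/- Let x = ∏_{i=1}^{m−1} cos²θ_i, y = ∏_{i=1}^{m−1} sin²θ_i, z = ∏_{i=1}^{m−1} sin(2θ_i) for real θ_1,…,θ_{m−1}, and let 0 < α < 2^{m−1}/(2^{m−1}−1). Then (1/2)·(α(x+y) + sqrt(α²(x−y)² + 4z²)) ≤ α/2^{m−1} + 1. -/
/-!
The left-hand side is the largest eigenvalue of the symmetric matrix `[[α x, z], [z, α y]]`, so it
is at most `K = α / N + 1` (where `N = 2^(m-1)`) as soon as `α x, α y ≤ K` and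
`z² ≤ (K - α x) (K - α y)`. With `X = ∏ |cos θᵢ|` and `Y = ∏ |sin θᵢ|` one has `x = X²`, `y = Y²`
and `z² = (N X Y)²`, and everything follows from `X² + Y² + (N - 2) X Y ≤ 1`. That inequality is
proved by induction on the number of factors: passing from `(X, Y)` to `(c X, s Y)` with
`c² + s² = 1`, AM-GM reduces the step to `((N - 1) X Y)² ≤ (1 - X²) (1 - Y²)`, which is the product
of the two bounds `Y² + (N - 2) X Y ≤ 1 - X²` and `X² + (N - 2) X Y ≤ 1 - Y²`.
-/

open Real Finset

theorem mul_sq_add_mul_sq_add_mul_le_one {N X Y c s : ℝ} (hN : 2 ≤ N) (hX : 0 ≤ X) (hY : 0 ≤ Y)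
    (hc : 0 ≤ c) (hs : 0 ≤ s) (hcs : c ^ 2 + s ^ 2 = 1)
    (h : X ^ 2 + Y ^ 2 + (N - 2) * (X * Y) ≤ 1) :
    (c * X) ^ 2 + (s * Y) ^ 2 + (2 * N - 2) * ((c * X) * (s * Y)) ≤ 1 := by
  have hXY : 0 ≤ (N - 2) * (X * Y) := mul_nonneg (by linarith) (mul_nonneg hX hY)
  have hA : Y ^ 2 + (N - 2) * (X * Y) ≤ 1 - X ^ 2 := by linarith
  have hB : X ^ 2 + (N - 2) * (X * Y) ≤ 1 - Y ^ 2 := by linarith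
  have hAB : ((N - 1) * (X * Y)) ^ 2 ≤ (1 - X ^ 2) * (1 - Y ^ 2) :=
    calc ((N - 1) * (X * Y)) ^ 2
        ≤ (Y ^ 2 + (N - 2) * (X * Y)) * (X ^ 2 + (N - 2) * (X * Y)) := by
          nlinarith [mul_nonneg hXY (sq_nonneg (X - Y))]
      _ ≤ (1 - X ^ 2) * (1 - Y ^ 2) :=
          mul_le_mul hA hB (by positivity) (by linarith [sq_nonneg Y])
  have hT : (N - 1) * (X * Y) ≤ √(1 - X ^ 2) * √(1 - Y ^ 2) := by
    rw [← sqrt_mul (by linarith [sq_nonneg Y])]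
    exact le_sqrt_of_sq_le hAB
  have hamgm := two_mul_le_add_sq (c * √(1 - X ^ 2)) (s * √(1 - Y ^ 2))
  rw [mul_pow, mul_pow, sq_sqrt (by linarith [sq_nonneg Y]),
    sq_sqrt (by linarith [sq_nonneg X])] at hamgm
  nlinarith [mul_le_mul_of_nonneg_left hT (mul_nonneg hc hs)]

theorem Finset.sq_prod_add_sq_prod_add_mul_le_one {ι : Type*} {t : Finset ι} (ht : t.Nonempty)
    {c s : ι → ℝ} (hc : ∀ i ∈ t, 0 ≤ c i) (hs : ∀ i ∈ t, 0 ≤ s i)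
    (hcs : ∀ i ∈ t, c i ^ 2 + s i ^ 2 = 1) :
    (∏ i ∈ t, c i) ^ 2 + (∏ i ∈ t, s i) ^ 2
      + ((2 : ℝ) ^ #t - 2) * ((∏ i ∈ t, c i) * ∏ i ∈ t, s i) ≤ 1 := by
  induction ht using Finset.Nonempty.cons_induction with
  | singleton a => simpa using (hcs a (mem_singleton_self a)).le
  | cons a t _ ht ih =>
    simp only [mem_cons, forall_eq_or_imp] at hc hs hcs
    rw [prod_cons, prod_cons, card_cons]
    have hN : (2 : ℝ) ≤ 2 ^ #t := le_self_pow₀ one_le_two (card_ne_zero.mpr ht)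
    convert mul_sq_add_mul_sq_add_mul_le_one hN (prod_nonneg hc.2) (prod_nonneg hs.2)
      hc.1 hs.1 hcs.1 (ih hc.2 hs.2 hcs.2) using 2
    ring

theorem half_add_sqrt_le {a b c K : ℝ} (ha : a ≤ K) (hb : b ≤ K) (h : c ^ 2 ≤ (K - a) * (K - b)) :
    (1 / 2) * (a + b + √((a - b) ^ 2 + 4 * c ^ 2)) ≤ K := by
  have : √((a - b) ^ 2 + 4 * c ^ 2) ≤ 2 * K - (a + b) :=
    sqrt_le_iff.mpr ⟨by linarith, by nlinarith⟩
  linarith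

theorem mul_le_of_add_add_mul_le {N β p q : ℝ} (hβ0 : 0 ≤ β) (hβ : β * (N - 1) ≤ 1)
    (hpq : p * q ≤ 1) (h : p + q + (N - 2) * (p * q) ≤ N) :
    p * q ≤ (1 + β - β * p) * (1 + β - β * q) := by
  -- the difference is `(1 + β) ((1 - β (N - 1)) (1 - p q) + β (N - p - q - (N - 2) p q))`
  nlinarith [mul_nonneg (by linarith : 0 ≤ 1 + β)
      (mul_nonneg (by linarith : 0 ≤ 1 - β * (N - 1)) (by linarith : 0 ≤ 1 - p * q)),
    mul_nonneg (by linarith : 0 ≤ 1 + β) (mul_nonneg hβ0 (by linarith : 0 ≤ N - p - q - (N - 2) * (p * q)))]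

theorem half_add_sqrt_le_of_sq_add_sq_add_mul_le_one {N α X Y : ℝ} (hN : 2 ≤ N) (hα0 : 0 ≤ α)
    (hα : α * (N - 1) ≤ N) (hXY : 0 ≤ X * Y) (hsep : X ^ 2 + Y ^ 2 + (N - 2) * (X * Y) ≤ 1) :
    (1 / 2) * (α * (X ^ 2 + Y ^ 2) + √(α ^ 2 * (X ^ 2 - Y ^ 2) ^ 2 + 4 * (N * X * Y) ^ 2))
      ≤ α / N + 1 := by
  have hN0 : 0 < N := by linarith
  obtain ⟨β, rfl⟩ : ∃ β, α = β * N := ⟨α / N, by field_simp⟩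
  rw [mul_div_cancel_right₀ β hN0.ne']
  have hβ0 : 0 ≤ β := (mul_nonneg_iff_of_pos_right hN0).mp hα0
  have hβ : β * (N - 1) ≤ 1 := le_of_mul_le_mul_right (by linarith) hN0
  have hXY2 : 0 ≤ (N - 2) * (X * Y) := mul_nonneg (by linarith) hXY
  have hNXY : N * (X * Y) ≤ 1 := by nlinarith [sq_nonneg (X - Y)]
  have hX : β * N * X ^ 2 ≤ β + 1 := by nlinarith [sq_nonneg Y]
  have hY : β * N * Y ^ 2 ≤ β + 1 := by nlinarith [sq_nonneg X]
  have key := mul_le_of_add_add_mul_le (p := N * X ^ 2) (q := N * Y ^ 2) hβ0 hβ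
    (by nlinarith) (by nlinarith [mul_le_mul_of_nonneg_left hNXY hXY2])
  convert half_add_sqrt_le hX hY (c := N * X * Y) (by linarith) using 4 <;> ring

/-- With `x = ∏cos²θᵢ`, `y = ∏sin²θᵢ`, `z = ∏sin(2θᵢ)` and `0 < α < 2^{m−1}/(2^{m−1}−1)`,
`(1/2)(α(x+y) + √(α²(x−y)² + 4z²)) ≤ α/2^{m−1} + 1`. -/
theorem stmt4 (m : ℕ) (hm : 2 ≤ m) (θ : Fin (m - 1) → ℝ) (α : ℝ)
    (hα0 : 0 < α) (hα : α < (2 : ℝ) ^ (m - 1) / ((2 : ℝ) ^ (m - 1) - 1)) :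
    (1 / 2) * (α * ((∏ i, Real.cos (θ i) ^ 2) + ∏ i, Real.sin (θ i) ^ 2)
      + Real.sqrt (α ^ 2 * ((∏ i, Real.cos (θ i) ^ 2) - ∏ i, Real.sin (θ i) ^ 2) ^ 2
        + 4 * (∏ i, Real.sin (2 * θ i)) ^ 2)) ≤ α / (2 : ℝ) ^ (m - 1) + 1 := by
  have hN : (2 : ℝ) ≤ 2 ^ (m - 1) := le_self_pow₀ one_le_two (by omega)
  have hsep := (univ : Finset (Fin (m - 1))).sq_prod_add_sq_prod_add_mul_le_one
    (univ_nonempty_iff.mpr ⟨⟨0, by omega⟩⟩) (c := fun i ↦ |cos (θ i)|) (s := fun i ↦ |sin (θ i)|)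
    (fun _ _ ↦ abs_nonneg _) (fun _ _ ↦ abs_nonneg _) (fun i _ ↦ by simp [sq_abs])
  rw [card_univ, Fintype.card_fin] at hsep
  have hcos : ∏ i, cos (θ i) ^ 2 = (∏ i, |cos (θ i)|) ^ 2 := by simp [← prod_pow, sq_abs]
  have hsin : ∏ i, sin (θ i) ^ 2 = (∏ i, |sin (θ i)|) ^ 2 := by simp [← prod_pow, sq_abs]
  have hsin_two_mul : (∏ i, sin (2 * θ i)) ^ 2
      = ((2 : ℝ) ^ (m - 1) * (∏ i, |cos (θ i)|) * ∏ i, |sin (θ i)|) ^ 2 := by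
    rw [← sq_abs, abs_prod]
    simp only [sin_two_mul, abs_mul, Nat.abs_ofNat, prod_mul_distrib, prod_const, card_univ,
      Fintype.card_fin]
    ring
  rw [hcos, hsin, hsin_two_mul]
  refine half_add_sqrt_le_of_sq_add_sq_add_mul_le_one hN hα0.le ?_
    (mul_nonneg (prod_nonneg fun _ _ ↦ abs_nonneg _) (prod_nonneg fun _ _ ↦ abs_nonneg _)) hsep
  rw [lt_div_iff₀ (by linarith)] at hα
  exact hα.le
end

section
/- With Tr(ρ_p·W) = (α+1)(1−p) + α·p/2^{n−1} and biseparable bound α/2 + 1, the inequality Tr(ρ_p·W) > α/2 + 1 holds if and only if p < α/(2 + (2 − 2^{2−n})α); moreover over α ∈ (0,2] the right-hand side is maximized at α = 2, giving threshold 1/(3 − 2^{2−n}). -/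
/-! With `c = 2^(2-n) ≤ 1` we have `2^(n-1) * c = 2`, so the witness value is affine in `p` and the
first claim is the solution of a linear inequality. The threshold `a / (2 + (2 - c) a)` is
increasing in `a > 0` because `2 - c ≥ 0`, so its maximum over `(0, 2]` is attained at `a = 2`. -/

open Set

lemma two_zpow_two_sub_le_one {n : ℕ} (hn : 2 ≤ n) : (2 : ℝ) ^ ((2 : ℤ) - n) ≤ 1 :=
  zpow_le_one_of_nonpos₀ one_le_two (by omega)

lemma two_pow_pred_mul_two_zpow_two_sub {n : ℕ} (hn : 1 ≤ n) :
    (2 : ℝ) ^ (n - 1) * (2 : ℝ) ^ ((2 : ℤ) - n) = 2 := by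
  rw [← zpow_natCast, ← zpow_add₀ two_ne_zero, show ((n - 1 : ℕ) : ℤ) + (2 - n) = 1 by omega,
    zpow_one]

lemma witness_gt_iff_lt_threshold {α p c : ℝ} (hD : 0 < 2 + (2 - c) * α) :
    (α + 1) * (1 - p) + α * p * c / 2 > α / 2 + 1 ↔ p < α / (2 + (2 - c) * α) := by
  rw [gt_iff_lt, lt_div_iff₀ hD]
  constructor <;> intro h <;> linarith

lemma monotoneOn_div_affine {b k : ℝ} (hb : 0 < b) (hk : 0 ≤ k) :
    MonotoneOn (fun a : ℝ => a / (b + k * a)) (Ioi 0) := by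
  intro x hx y hy hxy
  have hx' : 0 < b + k * x := by nlinarith [mem_Ioi.mp hx]
  have hy' : 0 < b + k * y := by nlinarith [mem_Ioi.mp hy]
  dsimp only
  rw [div_le_div_iff₀ hx' hy']
  nlinarith

theorem stmt9_general (n : ℕ) (hn : 2 ≤ n) (α p : ℝ)
    (hα : α ∈ Set.Ioc (0 : ℝ) 2) :
    ((α + 1) * (1 - p) + α * p / 2 ^ (n - 1) > α / 2 + 1 ↔
        p < α / (2 + (2 - (2 : ℝ) ^ ((2 : ℤ) - n)) * α)) ∧
    IsMaxOn (fun a : ℝ => a / (2 + (2 - (2 : ℝ) ^ ((2 : ℤ) - n)) * a)) (Set.Ioc 0 2) 2 ∧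
    (2 : ℝ) / (2 + (2 - (2 : ℝ) ^ ((2 : ℤ) - n)) * 2) = 1 / (3 - (2 : ℝ) ^ ((2 : ℤ) - n)) := by
  set c : ℝ := (2 : ℝ) ^ ((2 : ℤ) - n)
  have hc : c ≤ 1 := two_zpow_two_sub_le_one hn
  have hdiv : α * p / 2 ^ (n - 1) = α * p * c / 2 := by
    rw [div_eq_div_iff (by positivity) two_ne_zero]
    linear_combination (-(α * p)) * two_pow_pred_mul_two_zpow_two_sub (n := n) (by omega)
  refine ⟨?_, ?_, ?_⟩
  · rw [hdiv]
    exact witness_gt_iff_lt_threshold (by nlinarith [hα.1])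
  · exact fun a ha => monotoneOn_div_affine two_pos (by linarith) ha.1 (by norm_num) ha.2
  · rw [show (2 : ℝ) + (2 - c) * 2 = 2 * (3 - c) by ring, ← div_div, div_self two_ne_zero]

/-- With witness value `(α+1)(1−p) + αp/2^{n−1}` and biseparable bound `α/2 + 1`, the witness is
violated iff `p < α/(2 + (2 − 2^{2−n})α)`; the threshold is maximized over `α ∈ (0,2]` at `α = 2`,
giving `1/(3 − 2^{2−n})`. -/
theorem stmt9 (n : ℕ) (hn : 2 ≤ n) (α p : ℝ)
    (hα : α ∈ Set.Ioc (0 : ℝ) 2) (hp : p ∈ Set.Icc (0 : ℝ) 1) :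
    ((α + 1) * (1 - p) + α * p / 2 ^ (n - 1) > α / 2 + 1 ↔
        p < α / (2 + (2 - (2 : ℝ) ^ ((2 : ℤ) - n)) * α)) ∧
    IsMaxOn (fun a : ℝ => a / (2 + (2 - (2 : ℝ) ^ ((2 : ℤ) - n)) * a)) (Set.Ioc 0 2) 2 ∧
    (2 : ℝ) / (2 + (2 - (2 : ℝ) ^ ((2 : ℤ) - n)) * 2) = 1 / (3 - (2 : ℝ) ^ ((2 : ℤ) - n)) :=
  stmt9_general n hn α p hα
end

section
/- For the GHZ state mixed with white noise, ρ_p = (1−p)|GHZ_n⟩⟨GHZ_n| + p I/2^n, setting α = 2^{m−1}/(2^{m−1}−1), the witness value (α+1)(1−p) + α p/2^{n−1} exceeds the m-separable bound 2^{m−1}/(2^{m−1}−1) if and only if p < (2^m − 2)/(2(2^m − 2^{m−n} − 1)). -/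
/-!
With `x = 2^{m-1}` and `y = 2^{n-1}`, the witness value minus the bound is affine in `p`,
namely `1 - p (2xy - x - y) / ((x - 1) y)`, so it is positive exactly below the threshold
`(x - 1) y / (2xy - x - y)`, which is the stated fraction since `2^{m-n} = x / y`.
-/

theorem witness_gt_bound_iff_lt_threshold {x y p : ℝ} (hx : 1 < x) (hy : 1 ≤ y) :
    (x / (x - 1) + 1) * (1 - p) + x / (x - 1) * p / y > x / (x - 1) ↔
      p < (2 * x - 2) / (2 * (2 * x - x / y - 1)) := by
  have hx1 : 0 < x - 1 := sub_pos.mpr hx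
  have hy0 : 0 < y := by linarith
  have hD : 0 < 2 * x * y - x - y := by nlinarith
  have hwitness : (x / (x - 1) + 1) * (1 - p) + x / (x - 1) * p / y - x / (x - 1)
      = ((x - 1) * y - p * (2 * x * y - x - y)) / ((x - 1) * y) := by
    field_simp
    ring
  have hthreshold : (2 * x - 2) / (2 * (2 * x - x / y - 1))
      = (x - 1) * y / (2 * x * y - x - y) := by
    have : 2 * x - x / y - 1 = (2 * x * y - x - y) / y := by field_simp
    rw [this]
    field_simp
  rw [gt_iff_lt, ← sub_pos, hwitness, hthreshold, div_pos_iff_of_pos_right (by positivity),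
    sub_pos, lt_div_iff₀ hD]

theorem stmt11_general (n m : ℕ) (hn : 2 ≤ n) (hm : 2 ≤ m)
    (p : ℝ) :
    ((2 : ℝ) ^ (m - 1) / ((2 : ℝ) ^ (m - 1) - 1) + 1) * (1 - p)
        + ((2 : ℝ) ^ (m - 1) / ((2 : ℝ) ^ (m - 1) - 1)) * p / 2 ^ (n - 1)
      > (2 : ℝ) ^ (m - 1) / ((2 : ℝ) ^ (m - 1) - 1) ↔
    p < ((2 : ℝ) ^ m - 2) / (2 * ((2 : ℝ) ^ m - (2 : ℝ) ^ ((m : ℤ) - n) - 1)) := by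
  have hpow_m : (2 : ℝ) ^ m = 2 * 2 ^ (m - 1) := (mul_pow_sub_one (by omega) 2).symm
  have hpow_n : (2 : ℝ) ^ n = 2 * 2 ^ (n - 1) := (mul_pow_sub_one (by omega) 2).symm
  have hzpow : (2 : ℝ) ^ ((m : ℤ) - n) = 2 ^ (m - 1) / 2 ^ (n - 1) := by
    rw [zpow_sub₀ two_ne_zero, zpow_natCast, zpow_natCast, hpow_m, hpow_n,
      mul_div_mul_left _ _ two_ne_zero]
  rw [hpow_m, hzpow]
  exact witness_gt_bound_iff_lt_threshold (one_lt_pow₀ one_lt_two (by omega))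
    (one_le_pow₀ one_le_two)

/-- For the white-noise mixed GHZ state with `α = 2^{m−1}/(2^{m−1}−1)`, the witness value
`(α+1)(1−p) + αp/2^{n−1}` exceeds the `m`-separable bound `2^{m−1}/(2^{m−1}−1)` iff
`p < (2^m − 2)/(2(2^m − 2^{m−n} − 1))`. -/
theorem stmt11 (n m : ℕ) (hn : 2 ≤ n) (hm : 2 ≤ m) (hmn : m ≤ n)
    (p : ℝ) (hp : p ∈ Set.Icc (0 : ℝ) 1) :
    ((2 : ℝ) ^ (m - 1) / ((2 : ℝ) ^ (m - 1) - 1) + 1) * (1 - p)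
        + ((2 : ℝ) ^ (m - 1) / ((2 : ℝ) ^ (m - 1) - 1)) * p / 2 ^ (n - 1)
      > (2 : ℝ) ^ (m - 1) / ((2 : ℝ) ^ (m - 1) - 1) ↔
    p < ((2 : ℝ) ^ m - 2) / (2 * ((2 : ℝ) ^ m - (2 : ℝ) ^ ((m : ℤ) - n) - 1)) :=
  stmt11_general n m hn hm p
end

section
/- Let ρ = (1−p)|GHZ_n(θ,φ)⟩⟨GHZ_n(θ,φ)| + p·I/2^n. Then the maximum over sign choices of α⟨M_Z⟩_ρ ± ⟨M_X⟩_ρ with α = 2 exceeds the biseparable bound 2 if and only if p < sin(2θ)|cosφ| / (2 + sin(2θ)|cosφ| − 2^{2−n}). -/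
open Matrix Real Polynomial

noncomputable section

/-- The all-zeros computational basis label of `n` qubits. -/
def k0 (n : ℕ) : Fin n → Fin 2 := fun _ => 0

/-- The all-ones computational basis label of `n` qubits. -/
def k1 (n : ℕ) : Fin n → Fin 2 := fun _ => 1

/-- The observable `M_Z = |0⟩⟨0|^{⊗n} + |1⟩⟨1|^{⊗n}`. -/
def MZ (n : ℕ) : Matrix (Fin n → Fin 2) (Fin n → Fin 2) ℂ :=
  fun v w => (if v = k0 n ∧ w = k0 n then 1 else 0) + (if v = k1 n ∧ w = k1 n then 1 else 0)

/-- The observable `M_X = σ_x^{⊗n}`. -/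
def MX (n : ℕ) : Matrix (Fin n → Fin 2) (Fin n → Fin 2) ℂ :=
  fun v w => if (∀ i, w i = v i + 1) then 1 else 0

/-- The `n`-qubit GHZ state vector `(|0⟩^{⊗n} + |1⟩^{⊗n})/√2`. -/
def ghz (n : ℕ) : (Fin n → Fin 2) → ℂ :=
  fun v => ((if v = k0 n then 1 else 0) + (if v = k1 n then 1 else 0)) / (Real.sqrt 2 : ℝ)

/-- The projector `|GHZ_n⟩⟨GHZ_n|`. -/
def ghzProj (n : ℕ) : Matrix (Fin n → Fin 2) (Fin n → Fin 2) ℂ :=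
  vecMulVec (ghz n) (star (ghz n))

/-- The generalized GHZ state `|GHZ_n(θ,φ)⟩ = cosθ|0⟩^{⊗n} + e^{iφ} sinθ|1⟩^{⊗n}`. -/
def ghzθφ (n : ℕ) (θ φ : ℝ) : (Fin n → Fin 2) → ℂ :=
  fun v => (if v = k0 n then (Real.cos θ : ℂ) else 0)
    + (if v = k1 n then Complex.exp (φ * Complex.I) * (Real.sin θ : ℂ) else 0)

lemma k0_ne_k1 (n : ℕ) (hn : 1 ≤ n) : k0 n ≠ k1 n := by
  intro h
  have := congrFun h ⟨0, hn⟩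
  simp [k0, k1] at this

lemma conj_expI (φ : ℝ) : (starRingEnd ℂ) (Complex.exp (φ * Complex.I)) = Complex.exp (-(φ * Complex.I)) := by
  rw [← Complex.exp_conj]; simp [Complex.conj_ofReal]

lemma trace_vmv {n : ℕ} (u : (Fin n → Fin 2) → ℂ) (M : Matrix (Fin n → Fin 2) (Fin n → Fin 2) ℂ) :
    (vecMulVec u (star u) * M).trace = ∑ i, ∑ j, u i * (starRingEnd ℂ) (u j) * M j i := by
  simp [Matrix.trace, Matrix.diag, Matrix.mul_apply, vecMulVec_apply, Finset.mul_sum]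

lemma trace_vmv_two {n : ℕ} (a b : ℂ) (x y : Fin n → Fin 2) (hxy : x ≠ y)
    (M : Matrix (Fin n → Fin 2) (Fin n → Fin 2) ℂ) :
    (vecMulVec (fun v => (if v = x then a else 0) + if v = y then b else 0)
      (star (fun v => (if v = x then a else 0) + if v = y then b else 0)) * M).trace
      = a * (starRingEnd ℂ) a * M x x + a * (starRingEnd ℂ) b * M y x
        + b * (starRingEnd ℂ) a * M x y + b * (starRingEnd ℂ) b * M y y := by
  rw [trace_vmv]
  simp [add_mul, mul_add, Finset.sum_add_distrib, Finset.sum_ite_eq', hxy, hxy.symm,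
    apply_ite (starRingEnd ℂ), ite_mul, mul_ite]
  ring

lemma MX_k0k0 {n : ℕ} (hn : 1 ≤ n) : MX n (k0 n) (k0 n) = 0 := by
  simp only [MX]
  rw [if_neg]
  intro h; have := h ⟨0, hn⟩; simp [k0] at this
lemma MX_k1k1 {n : ℕ} (hn : 1 ≤ n) : MX n (k1 n) (k1 n) = 0 := by
  simp only [MX]
  rw [if_neg]
  intro h; have := h ⟨0, hn⟩; simp [k1] at this
lemma MX_k0k1 {n : ℕ} : MX n (k0 n) (k1 n) = 1 := by
  simp only [MX]
  rw [if_pos]; intro t; simp [k0, k1]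
lemma MX_k1k0 {n : ℕ} : MX n (k1 n) (k0 n) = 1 := by
  simp only [MX]
  rw [if_pos]; intro t; show (0 : Fin 2) = 1 + 1; decide

lemma MZ_vals {n : ℕ} (hn : 1 ≤ n) :
    MZ n (k0 n) (k0 n) = 1 ∧ MZ n (k1 n) (k1 n) = 1 ∧ MZ n (k0 n) (k1 n) = 0 ∧ MZ n (k1 n) (k0 n) = 0 := by
  have hne := k0_ne_k1 n hn
  refine ⟨?_, ?_, ?_, ?_⟩ <;> simp [MZ, hne, hne.symm]

lemma traceXpure (n : ℕ) (hn : 2 ≤ n) (θ φ : ℝ) :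
    (vecMulVec (ghzθφ n θ φ) (star (ghzθφ n θ φ)) * MX n).trace
      = ((Real.sin (2*θ) * Real.cos φ : ℝ) : ℂ) := by
  have hne := k0_ne_k1 n (by omega)
  have h1 : (1:ℕ) ≤ n := by omega
  rw [show ghzθφ n θ φ = (fun v => (if v = k0 n then ((Real.cos θ : ℝ) : ℂ) else 0)
      + if v = k1 n then Complex.exp (φ * Complex.I) * (Real.sin θ : ℂ) else 0) from rfl,
    trace_vmv_two _ _ _ _ hne, MX_k0k0 h1, MX_k1k1 h1, MX_k0k1, MX_k1k0]
  simp only [mul_zero, mul_one, add_zero, zero_add, _root_.map_mul, conj_expI, Complex.conj_ofReal]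
  have hc : ((Real.cos φ : ℝ) : ℂ) = (Complex.exp (φ*Complex.I) + Complex.exp (-(φ*Complex.I)))/2 := by
    rw [Complex.ofReal_cos, Complex.cos]; simp [neg_mul]
  rw [Real.sin_two_mul]
  push_cast [hc]
  ring

lemma traceZpure (n : ℕ) (hn : 2 ≤ n) (θ φ : ℝ) :
    (vecMulVec (ghzθφ n θ φ) (star (ghzθφ n θ φ)) * MZ n).trace = 1 := by
  have hne := k0_ne_k1 n (by omega)
  have h1 : (1:ℕ) ≤ n := by omega
  obtain ⟨e1, e2, e3, e4⟩ := MZ_vals h1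
  rw [show ghzθφ n θ φ = (fun v => (if v = k0 n then ((Real.cos θ : ℝ) : ℂ) else 0)
      + if v = k1 n then Complex.exp (φ * Complex.I) * (Real.sin θ : ℂ) else 0) from rfl,
    trace_vmv_two _ _ _ _ hne, e1, e2, e3, e4]
  simp only [mul_zero, mul_one, add_zero, zero_add, _root_.map_mul, conj_expI, Complex.conj_ofReal]
  rw [show Complex.exp (↑φ*Complex.I) * ↑(Real.sin θ) * (Complex.exp (-(↑φ*Complex.I)) * ↑(Real.sin θ))
      = (Complex.exp (↑φ*Complex.I) * Complex.exp (-(↑φ*Complex.I))) * (↑(Real.sin θ)*↑(Real.sin θ)) from by ring,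
    ← Complex.exp_add]
  simp
  norm_cast
  nlinarith [Real.sin_sq_add_cos_sq θ]

lemma trace_MZ (n : ℕ) (hn : 2 ≤ n) : (MZ n).trace = 2 := by
  have hne := k0_ne_k1 n (by omega)
  simp [Matrix.trace, Matrix.diag, MZ, Finset.sum_add_distrib, Finset.sum_ite_eq', hne, hne.symm]
  norm_num

lemma trace_MX (n : ℕ) (hn : 2 ≤ n) : (MX n).trace = 0 := by
  have : ∀ v : Fin n → Fin 2, MX n v v = 0 := by
    intro v; simp only [MX]; rw [if_neg]
    intro h
    have key : ∀ a : Fin 2, a ≠ a + 1 := by decide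
    exact key _ (h ⟨0, by omega⟩)
  simp [Matrix.trace, Matrix.diag, this]

/-- For `ρ = (1−p)|GHZ_n(θ,φ)⟩⟨GHZ_n(θ,φ)| + p·I/2ⁿ`, the maximum over sign choices of
`2⟨M_Z⟩_ρ ± ⟨M_X⟩_ρ` exceeds the biseparable bound `2` iff
`p < sin(2θ)|cosφ| / (2 + sin(2θ)|cosφ| − 2^{2−n})`. -/
theorem stmt14 (n : ℕ) (hn : 2 ≤ n) (θ φ p : ℝ)
    (hθ : θ ∈ Set.Ioc 0 (π / 4)) (hφ : Real.cos φ ≠ 0) (hp : p ∈ Set.Icc (0 : ℝ) 1) :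
    let ρ : Matrix (Fin n → Fin 2) (Fin n → Fin 2) ℂ :=
      (1 - p : ℝ) • vecMulVec (ghzθφ n θ φ) (star (ghzθφ n θ φ))
        + (p / 2 ^ n : ℝ) • 1
    max (2 * ((ρ * MZ n).trace).re + ((ρ * MX n).trace).re)
        (2 * ((ρ * MZ n).trace).re - ((ρ * MX n).trace).re) > 2 ↔
      p < Real.sin (2 * θ) * |Real.cos φ|
          / (2 + Real.sin (2 * θ) * |Real.cos φ| - (2 : ℝ) ^ ((2 : ℤ) - n)) := by
  intro ρ
  obtain ⟨hθ0, hθ1⟩ := hθ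
  obtain ⟨hp0, hp1⟩ := hp
  have hZ : ((ρ * MZ n).trace).re = (1 - p) + p / 2 ^ n * 2 := by
    show (((1 - p : ℝ) • vecMulVec (ghzθφ n θ φ) (star (ghzθφ n θ φ))
        + (p / 2 ^ n : ℝ) • 1) * MZ n).trace.re = _
    rw [Matrix.add_mul, Matrix.smul_mul, Matrix.smul_mul, Matrix.one_mul,
      Matrix.trace_add, Matrix.trace_smul, Matrix.trace_smul, traceZpure n hn,
      trace_MZ n hn]
    rw [show ((1 - p:ℝ) • (1:ℂ) + (p / 2^n : ℝ) • (2:ℂ)) = (((1-p) + p/2^n*2 : ℝ) : ℂ) by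
      push_cast [Complex.real_smul]; ring, Complex.ofReal_re]
  have hX : ((ρ * MX n).trace).re = (1 - p) * (Real.sin (2*θ) * Real.cos φ) := by
    show (((1 - p : ℝ) • vecMulVec (ghzθφ n θ φ) (star (ghzθφ n θ φ))
        + (p / 2 ^ n : ℝ) • 1) * MX n).trace.re = _
    rw [Matrix.add_mul, Matrix.smul_mul, Matrix.smul_mul, Matrix.one_mul,
      Matrix.trace_add, Matrix.trace_smul, Matrix.trace_smul, traceXpure n hn,
      trace_MX n hn]
    rw [show ((1 - p:ℝ) • ((Real.sin (2*θ) * Real.cos φ : ℝ):ℂ) + (p / 2^n : ℝ) • (0:ℂ))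
        = (((1-p) * (Real.sin (2*θ) * Real.cos φ) : ℝ) : ℂ) by
      push_cast [Complex.real_smul]; ring, Complex.ofReal_re]
  rw [hZ, hX]
  have hs2 : 0 < Real.sin (2*θ) := by
    apply Real.sin_pos_of_pos_of_lt_pi <;> nlinarith [Real.pi_pos]
  have hcabs : 0 < |Real.cos φ| := abs_pos.mpr hφ
  set s2 := Real.sin (2*θ) with hs2def
  set c := Real.cos φ with hcdef
  set A := 2 * ((1 - p) + p / 2 ^ n * 2) with hA
  set B := (1 - p) * (s2 * c) with hB
  have hmax : max (A + B) (A - B) = A + (1 - p) * (s2 * |c|) := by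
    have habs : |B| = (1 - p) * (s2 * |c|) := by
      rw [hB, abs_mul, abs_mul, abs_of_nonneg (show (0:ℝ) ≤ 1 - p by linarith),
        abs_of_nonneg hs2.le]
    rw [← habs]
    rcases abs_cases B with ⟨h1, h2⟩ | ⟨h1, h2⟩
    · rw [max_eq_left (by linarith), h1]
    · rw [max_eq_right (by linarith), h1, sub_eq_add_neg]
  rw [hmax]
  have hpn : (0:ℝ) < 2 ^ n := by positivity
  have h2n : (2:ℝ) ^ ((2:ℤ) - n) = 4 / 2 ^ n := by
    rw [zpow_sub₀ (by norm_num : (2:ℝ) ≠ 0)]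
    norm_num
  have hpow : (4:ℝ) ≤ 2 ^ n := by
    calc (4:ℝ) = 2 ^ 2 := by norm_num
    _ ≤ 2 ^ n := by apply pow_le_pow_right₀ (by norm_num) hn
  have h2nle : (4:ℝ) / 2 ^ n ≤ 1 := by
    rw [div_le_one hpn]; linarith
  have hD : 0 < 2 + s2 * |c| - (2:ℝ) ^ ((2:ℤ) - n) := by
    rw [h2n]; nlinarith
  rw [h2n] at hD
  rw [h2n, lt_div_iff₀ hD]
  have hrw : A + (1 - p) * (s2 * |c|)
      = 2 + s2 * |c| - p * (2 + s2 * |c| - 4 / 2 ^ n) := by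
    rw [hA]; field_simp; ring
  rw [hrw]
  constructor <;> intro h <;> linarith
end
end

section
/- The 2^{n}×2^{n} matrix M_b = αx·|0⟩⟨0|^{⊗n} + αy·|1⟩⟨1|^{⊗n} + z·σ_x^{⊗n} (with x, y ≥ 0 and α > 0) has eigenvalues z and −z each with multiplicity 2^{n−1} − 1, and two simple eigenvalues λ_± = α(x+y)/2 ± sqrt(z² + α²(x−y)²/4). -/
/-!
Shearing bit strings, `v ↦ (v i₀, v - const (v i₀))`, pairs each string with its complement,
i.e. splits the index set into the orbits of `σ_x^{⊗n}`. In these coordinates `M_b` is block diagonal with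
`2^{n-1}` blocks of size two: the block of the pair `{0…0, 1…1}` is `[[αx, z], [z, αy]]`, with
eigenvalues `λ_±`, and every other block is `z σ_x`, with eigenvalues `±z`.
-/

open Matrix Real Polynomial

noncomputable section

/-- The real matrix `M_b = αx·|0⟩⟨0|^{⊗n} + αy·|1⟩⟨1|^{⊗n} + z·σ_x^{⊗n}`. -/
def MbR (n : ℕ) (α x y z : ℝ) : Matrix (Fin n → Fin 2) (Fin n → Fin 2) ℝ :=
  fun v w => α * x * (if v = k0 n ∧ w = k0 n then 1 else 0)
    + α * y * (if v = k1 n ∧ w = k1 n then 1 else 0)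
    + z * (if (∀ i, w i = v i + 1) then 1 else 0)

open Function

section Shear

variable {ι G : Type*} [AddGroup G] (i₀ : ι)

def shearEquiv : (ι → G) ≃ G × {f : ι → G // f i₀ = 0} where
  toFun v := (v i₀, ⟨v - const ι (v i₀), sub_self (v i₀)⟩)
  invFun p := p.2.1 + const ι p.1
  left_inv v := sub_add_cancel v _
  right_inv := by
    rintro ⟨a, r, hr⟩
    ext <;> simp [hr]

lemma shearEquiv_symm_zero (a : G) : (shearEquiv i₀).symm (a, ⟨0, rfl⟩) = const ι a :=
  zero_add _

lemma shearEquiv_symm_add_const (a b : G) (r : {f : ι → G // f i₀ = 0}) :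
    (shearEquiv i₀).symm (a, r) + const ι b = (shearEquiv i₀).symm (a + b, r) := by
  simp [shearEquiv, add_assoc]

end Shear

lemma charmatrix_blockDiagonal {o m R : Type*} [Fintype o] [DecidableEq o] [Fintype m]
    [DecidableEq m] [CommRing R] (M : o → Matrix m m R) :
    charmatrix (blockDiagonal M) = blockDiagonal fun k => charmatrix (M k) := by
  ext ⟨i, k⟩ ⟨j, k'⟩
  by_cases hk : k = k'
  · subst hk
    by_cases hij : i = j <;> simp [hij]
  · simp [hk, blockDiagonal_apply_ne, Prod.ext_iff]

lemma charpoly_blockDiagonal {o m R : Type*} [Fintype o] [DecidableEq o] [Fintype m]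
    [DecidableEq m] [CommRing R] (M : o → Matrix m m R) :
    (blockDiagonal M).charpoly = ∏ k, (M k).charpoly := by
  rw [charpoly, charmatrix_blockDiagonal, det_blockDiagonal]; rfl

lemma charpoly_fin_two_eq_of_trace_det {R : Type*} [CommRing R] [Nontrivial R]
    (M : Matrix (Fin 2) (Fin 2) R) {a b : R} (htrace : a + b = M.trace) (hdet : a * b = M.det) :
    M.charpoly = (X - C a) * (X - C b) := by
  rw [charpoly_fin_two, ← htrace, ← hdet, C_add, C_mul]
  ring

lemma prod_ite_eq_mul_pow {o M : Type*} [Fintype o] [DecidableEq o] [CommMonoid M]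
    (c : o) (a b : M) :
    ∏ k, (if k = c then a else b) = a * b ^ (Fintype.card o - 1) := by
  rw [← Finset.mul_prod_erase _ _ (Finset.mem_univ c), if_pos rfl,
    Finset.prod_congr rfl fun k hk => if_neg (Finset.ne_of_mem_erase hk), Finset.prod_const,
    Finset.card_erase_of_mem (Finset.mem_univ c), Finset.card_univ]

section Mb

variable {n : ℕ} (i₀ : Fin n)

def mbBlock (α x y z : ℝ) (r : {f : Fin n → Fin 2 // f i₀ = 0}) : Matrix (Fin 2) (Fin 2) ℝ :=
  if r = ⟨0, rfl⟩ then !![α * x, z; z, α * y] else !![0, z; z, 0]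

lemma reindex_shearEquiv_MbR (α x y z : ℝ) :
    reindex (shearEquiv i₀) (shearEquiv i₀) (MbR n α x y z) =
      blockDiagonal (mbBlock i₀ α x y z) := by
  ext ⟨a, r⟩ ⟨b, s⟩
  set e := shearEquiv (G := Fin 2) i₀
  have h0 : k0 n = e.symm (0, ⟨0, rfl⟩) := (shearEquiv_symm_zero i₀ 0).symm
  have h1 : k1 n = e.symm (1, ⟨0, rfl⟩) := (shearEquiv_symm_zero i₀ 1).symm
  have hflip : (∀ i, e.symm (b, s) i = e.symm (a, r) i + 1) ↔ (b, s) = (a + 1, r) := by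
    rw [← e.symm.injective.eq_iff, ← shearEquiv_symm_add_const, funext_iff]; rfl
  simp only [reindex_apply, submatrix_apply, MbR, h0, h1, hflip, e.symm.injective.eq_iff,
    blockDiagonal_apply, mbBlock]
  by_cases hrs : r = s
  · subst hrs
    by_cases hr : r = ⟨0, rfl⟩ <;> fin_cases a <;> fin_cases b <;> simp [hr]
  · have : ∀ c d : Fin 2, ¬((a = c ∧ r = ⟨0, rfl⟩) ∧ b = d ∧ s = ⟨0, rfl⟩) :=
      fun _ _ h => hrs (h.1.2.trans h.2.2.symm)
    simp [hrs, Ne.symm hrs, this]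

lemma card_subtype_apply_eq_zero :
    Fintype.card {f : Fin n → Fin 2 // f i₀ = 0} = 2 ^ (n - 1) := by
  have hcard := Fintype.card_congr (shearEquiv (G := Fin 2) i₀)
  rw [Fintype.card_prod, Fintype.card_fun, Fintype.card_fin, Fintype.card_fin,
    ← pow_sub_one_mul i₀.pos.ne', mul_comm] at hcard
  exact (Nat.eq_of_mul_eq_mul_left two_pos hcard).symm

end Mb

lemma charpoly_symm_fin_two (p q z : ℝ) :
    (!![p, z; z, q]).charpoly = (X - C ((p + q) / 2 + √(z ^ 2 + (p - q) ^ 2 / 4))) *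
      (X - C ((p + q) / 2 - √(z ^ 2 + (p - q) ^ 2 / 4))) := by
  have hd := Real.sq_sqrt (by positivity : 0 ≤ z ^ 2 + (p - q) ^ 2 / 4)
  refine charpoly_fin_two_eq_of_trace_det _ ?_ ?_
  · rw [trace_fin_two_of]; ring
  · rw [det_fin_two_of]; linear_combination -hd

theorem stmt15_general (n : ℕ) (hn : 1 ≤ n) (α x y z : ℝ) :
    (MbR n α x y z).charpoly =
      (X - C z) ^ (2 ^ (n - 1) - 1) * (X + C z) ^ (2 ^ (n - 1) - 1) *
        (X - C (α * (x + y) / 2 + Real.sqrt (z ^ 2 + α ^ 2 * (x - y) ^ 2 / 4))) *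
        (X - C (α * (x + y) / 2 - Real.sqrt (z ^ 2 + α ^ 2 * (x - y) ^ 2 / 4))) := by
  let i₀ : Fin n := ⟨0, hn⟩
  have hP := charpoly_symm_fin_two (α * x) (α * y) z
  rw [show (α * x + α * y) / 2 = α * (x + y) / 2 by ring,
    show (α * x - α * y) ^ 2 / 4 = α ^ 2 * (x - y) ^ 2 / 4 by ring] at hP
  have hQ : (!![0, z; z, 0]).charpoly = (X - C z) * (X + C z) := by
    rw [← sub_neg_eq_add, ← C_neg]
    exact charpoly_fin_two_eq_of_trace_det _ (by simp [trace_fin_two]) (by simp [det_fin_two])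
  rw [← charpoly_reindex (shearEquiv i₀), reindex_shearEquiv_MbR, charpoly_blockDiagonal]
  simp only [mbBlock, apply_ite charpoly, hP, hQ]
  rw [prod_ite_eq_mul_pow, card_subtype_apply_eq_zero, mul_pow]
  ring

/-- `M_b` has eigenvalues `z` and `−z`, each with multiplicity `2^{n−1} − 1`, and two simple
eigenvalues `λ_± = α(x+y)/2 ± √(z² + α²(x−y)²/4)`, as recorded by its characteristic
polynomial. -/
theorem stmt15 (n : ℕ) (hn : 1 ≤ n) (α x y z : ℝ) (hα : 0 < α) (hx : 0 ≤ x) (hy : 0 ≤ y) :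
    (MbR n α x y z).charpoly =
      (X - C z) ^ (2 ^ (n - 1) - 1) * (X + C z) ^ (2 ^ (n - 1) - 1) *
        (X - C (α * (x + y) / 2 + Real.sqrt (z ^ 2 + α ^ 2 * (x - y) ^ 2 / 4))) *
        (X - C (α * (x + y) / 2 - Real.sqrt (z ^ 2 + α ^ 2 * (x - y) ^ 2 / 4))) :=
  stmt15_general n hn α x y z
end
end
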